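/- For π-reversible P, orbit partition with Gibbs kernel G, and l ∈ ℕ: ‖(GPG)^l − Π‖_{F,π} ≤ ‖(PG)^l − Π‖_{F,π} = ‖(GP)^l − Π‖_{F,π}, and for l ≥ 2 additionally ‖(PG)^l − Π‖_{F,π} ≤ ‖(GPG)^{l−1} − Π‖_{F,π}. -/
import Mathlib


open Finset Matrix

namespace GpgStmt

noncomputable section

variable {X : Type*}

/-- Matrix with all rows equal to π. -/
def Pimat {X : Type*} (π : X → ℝ) : Matrix X X ℝ := Matrix.of fun _ y => π y

def IsStochastic [Fintype X] (P : Matrix X X ℝ) : Prop :=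
  (∀ x y, 0 ≤ P x y) ∧ ∀ x, ∑ y, P x y = 1

/-- π-stationary transition matrix. -/
def IsStationary [Fintype X] (π : X → ℝ) (P : Matrix X X ℝ) : Prop :=
  IsStochastic P ∧ ∀ y, ∑ x, π x * P x y = π y

/-- π-reversible transition matrix. -/
def IsReversible [Fintype X] (π : X → ℝ) (P : Matrix X X ℝ) : Prop :=
  IsStochastic P ∧ ∀ x y, π x * P x y = π y * P y x

/-- mass of the orbit O_i = {x | o x = i}. -/
def orbMass [Fintype X] {k : ℕ} (π : X → ℝ) (o : X → Fin k) (i : Fin k) : ℝ :=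
  ∑ x ∈ Finset.filter (fun x => o x = i) Finset.univ, π x

/-- Gibbs kernel of the orbit partition induced by o. -/
def gibbs [Fintype X] {k : ℕ} (π : X → ℝ) (o : X → Fin k) : Matrix X X ℝ :=
  Matrix.of fun x y => if o x = o y then π y / orbMass π o (o x) else 0

/-- Projection chain P̄ of P with respect to the orbit partition induced by o. -/
def projChain [Fintype X] {k : ℕ} (π : X → ℝ) (o : X → Fin k) (P : Matrix X X ℝ) :
    Matrix (Fin k) (Fin k) ℝ :=
  Matrix.of fun i j => (1 / orbMass π o i) *
    ∑ x ∈ Finset.filter (fun x => o x = i) Finset.univ,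
      ∑ y ∈ Finset.filter (fun y => o y = j) Finset.univ, π x * P x y

/-- π-weighted KL divergence between transition matrices, with 0·log(0/a) = 0. -/
def klDiv {X : Type*} [Fintype X] (π : X → ℝ) (Q R : Matrix X X ℝ) : ℝ :=
  ∑ x, ∑ y, π x * Q x y * Real.log (Q x y / R x y)

/-- ℓ²(π)-adjoint of a matrix. -/
def piAdj [Fintype X] (π : X → ℝ) (M : Matrix X X ℝ) : Matrix X X ℝ :=
  Matrix.of fun x y => π y * M y x / π x

/-- squared π-weighted Frobenius norm ‖M‖²_{F,π} = Tr(M*M). -/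
def frobSq [Fintype X] (π : X → ℝ) (M : Matrix X X ℝ) : ℝ :=
  Matrix.trace (piAdj π M * M)

/-- π-mass of a finite set. -/
def mass [Fintype X] (π : X → ℝ) (S : Finset X) : ℝ := ∑ x ∈ S, π x

/-- Two-block Gibbs kernel G_S for the partition X = S ⊔ Sᶜ. -/
def gibbsTwo [Fintype X] [DecidableEq X] (π : X → ℝ) (S : Finset X) : Matrix X X ℝ :=
  Matrix.of fun x y =>
    if x ∈ S then (if y ∈ S then π y / mass π S else 0)
    else (if y ∈ S then 0 else π y / mass π Sᶜ)

/-- g(S) = (1/(π(S)π(S'))) Σ_{x∈S,y∈S'} π(x) P²(x,y). -/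
def gfun [Fintype X] [DecidableEq X] (π : X → ℝ) (P : Matrix X X ℝ) (S : Finset X) : ℝ :=
  (1 / (mass π S * mass π Sᶜ)) * ∑ x ∈ S, ∑ y ∈ Sᶜ, π x * (P * P) x y

/-- h(S) = (1/π(S)) Σ_{x∈S,y∈S'} π(x) P²(x,y). -/
def hfun [Fintype X] [DecidableEq X] (π : X → ℝ) (P : Matrix X X ℝ) (S : Finset X) : ℝ :=
  (1 / mass π S) * ∑ x ∈ S, ∑ y ∈ Sᶜ, π x * (P * P) x y

/-- Ergodicity (primitivity): some power of P has all entries positive. -/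
def IsErgodic [Fintype X] [DecidableEq X] (P : Matrix X X ℝ) : Prop :=
  ∃ m : ℕ, ∀ x y, 0 < (P ^ m) x y

/-- Shannon entropy of π. -/
def shannonEnt [Fintype X] (π : X → ℝ) : ℝ := -∑ x, π x * Real.log (π x)

/-- Entropy rate H_π(Q). -/
def entRate [Fintype X] (π : X → ℝ) (Q : Matrix X X ℝ) : ℝ :=
  -∑ x, ∑ y, π x * Q x y * Real.log (Q x y)

/-- Supermodular set function on 2^X. -/
def Supermodular {X : Type*} [DecidableEq X] (F : Finset X → ℝ) : Prop :=
  ∀ A B : Finset X, F A + F B ≤ F (A ∩ B) + F (A ∪ B)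

/-- Submodular set function on 2^X. -/
def Submodular {X : Type*} [DecidableEq X] (F : Finset X → ℝ) : Prop :=
  ∀ A B : Finset X, F (A ∩ B) + F (A ∪ B) ≤ F A + F B


/-! ### Auxiliary machinery -/

/-- π-weighted Frobenius inner product. -/
def ip [Fintype X] (π : X → ℝ) (A B : Matrix X X ℝ) : ℝ :=
  ∑ x, ∑ y, π x * A x y * B x y / π y

lemma frobSq_eq [Fintype X] (π : X → ℝ) (M : Matrix X X ℝ) :
    frobSq π M = ip π M M := by
  unfold frobSq ip
  rw [Matrix.trace]
  simp only [Matrix.diag_apply, Matrix.mul_apply, piAdj, Matrix.of_apply]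
  rw [Finset.sum_comm]
  exact Finset.sum_congr rfl fun x _ => Finset.sum_congr rfl fun y _ => by ring

lemma ip_comm [Fintype X] (π : X → ℝ) (A B : Matrix X X ℝ) : ip π A B = ip π B A := by
  unfold ip
  exact Finset.sum_congr rfl fun x _ => Finset.sum_congr rfl fun y _ => by ring

lemma ip_nonneg [Fintype X] (π : X → ℝ) (hπ : ∀ x, 0 < π x) (A : Matrix X X ℝ) :
    0 ≤ ip π A A := by
  unfold ip
  refine Finset.sum_nonneg fun x _ => Finset.sum_nonneg fun y _ => ?_
  have h : π x * A x y * A x y / π y = π x * (A x y) ^ 2 / π y := by ring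
  rw [h]
  have h1 := hπ x
  have h2 := hπ y
  positivity

lemma ip_sub_left [Fintype X] (π : X → ℝ) (A B C : Matrix X X ℝ) :
    ip π (A - B) C = ip π A C - ip π B C := by
  unfold ip
  rw [← Finset.sum_sub_distrib]
  refine Finset.sum_congr rfl fun x _ => ?_
  rw [← Finset.sum_sub_distrib]
  refine Finset.sum_congr rfl fun y _ => ?_
  simp only [Matrix.sub_apply]; ring

lemma ip_sub_right [Fintype X] (π : X → ℝ) (A B C : Matrix X X ℝ) :
    ip π C (A - B) = ip π C A - ip π C B := by
  rw [ip_comm, ip_sub_left, ip_comm π A, ip_comm π B]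

lemma ip_mul_left_expand [Fintype X] (π : X → ℝ) (Q A B : Matrix X X ℝ) :
    ip π (Q * A) B = ∑ x, ∑ z, ∑ y, π x * Q x z * A z y * B x y / π y := by
  unfold ip
  refine Finset.sum_congr rfl fun x _ => ?_
  rw [Finset.sum_comm]
  refine Finset.sum_congr rfl fun y _ => ?_
  simp only [Matrix.mul_apply]
  rw [Finset.mul_sum, Finset.sum_mul, Finset.sum_div]
  exact Finset.sum_congr rfl fun z _ => by ring

lemma ip_mul_right_expand [Fintype X] (π : X → ℝ) (Q A B : Matrix X X ℝ) :
    ip π A (Q * B) = ∑ x, ∑ z, ∑ y, π x * Q x z * A x y * B z y / π y := by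
  unfold ip
  refine Finset.sum_congr rfl fun x _ => ?_
  rw [Finset.sum_comm]
  refine Finset.sum_congr rfl fun y _ => ?_
  simp only [Matrix.mul_apply]
  rw [Finset.mul_sum, Finset.sum_div]
  exact Finset.sum_congr rfl fun z _ => by ring

lemma ip_move [Fintype X] (π : X → ℝ) (Q : Matrix X X ℝ)
    (hrev : ∀ x y, π x * Q x y = π y * Q y x) (A B : Matrix X X ℝ) :
    ip π (Q * A) B = ip π A (Q * B) := by
  rw [ip_mul_left_expand, ip_mul_right_expand, Finset.sum_comm]
  refine Finset.sum_congr rfl fun x _ => Finset.sum_congr rfl fun z _ =>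
    Finset.sum_congr rfl fun y _ => ?_
  rw [hrev z x]

lemma ip_contract [Fintype X] (π : X → ℝ) (hπ : ∀ x, 0 < π x) (Q : Matrix X X ℝ)
    (hrev : ∀ x y, π x * Q x y = π y * Q y x) (h0 : ∀ x y, 0 ≤ Q x y)
    (hrow : ∀ x, ∑ y, Q x y = 1) (A : Matrix X X ℝ) :
    ip π A (Q * A) ≤ ip π A A := by
  have hcol : ∀ z, ∑ x, π x * Q x z = π z := by
    intro z
    calc ∑ x, π x * Q x z = ∑ x, π z * Q z x :=
          Finset.sum_congr rfl fun x _ => hrev x z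
      _ = π z * ∑ x, Q z x := by rw [Finset.mul_sum]
      _ = π z := by rw [hrow]; ring
  have L : ip π A (Q * A) = ∑ y, (∑ x, ∑ z, π x * Q x z * A x y * A z y) / π y := by
    unfold ip
    rw [Finset.sum_comm]
    refine Finset.sum_congr rfl fun y _ => ?_
    rw [Finset.sum_div]
    refine Finset.sum_congr rfl fun x _ => ?_
    simp only [Matrix.mul_apply]
    rw [Finset.mul_sum, Finset.sum_div, Finset.sum_div]
    exact Finset.sum_congr rfl fun z _ => by ring
  have R : ip π A A = ∑ y, (∑ x, π x * A x y * A x y) / π y := by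
    unfold ip
    rw [Finset.sum_comm]
    exact Finset.sum_congr rfl fun y _ => by rw [Finset.sum_div]
  rw [L, R]
  refine Finset.sum_le_sum fun y _ => ?_
  have hy := hπ y
  rw [div_le_div_iff_of_pos_right hy]
  calc ∑ x, ∑ z, π x * Q x z * A x y * A z y
      ≤ ∑ x, ∑ z, π x * Q x z * (((A x y) ^ 2 + (A z y) ^ 2) / 2) := by
        refine Finset.sum_le_sum fun x _ => Finset.sum_le_sum fun z _ => ?_
        nlinarith [mul_nonneg (mul_nonneg (hπ x).le (h0 x z)) (sq_nonneg (A x y - A z y))]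
    _ = ∑ x, ∑ z, (π x * Q x z * ((A x y) ^ 2 / 2) + π x * Q x z * ((A z y) ^ 2 / 2)) := by
        exact Finset.sum_congr rfl fun x _ => Finset.sum_congr rfl fun z _ => by ring
    _ = (∑ x, ∑ z, π x * Q x z * ((A x y) ^ 2 / 2))
        + ∑ x, ∑ z, π x * Q x z * ((A z y) ^ 2 / 2) := by
        rw [← Finset.sum_add_distrib]
        exact Finset.sum_congr rfl fun x _ => by rw [Finset.sum_add_distrib]
    _ = (∑ x, π x * ((A x y) ^ 2 / 2)) + ∑ z, π z * ((A z y) ^ 2 / 2) := by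
        congr 1
        · refine Finset.sum_congr rfl fun x _ => ?_
          have h : ∑ z, π x * Q x z * ((A x y) ^ 2 / 2)
              = (∑ z, Q x z) * (π x * ((A x y) ^ 2 / 2)) := by
            rw [Finset.sum_mul]
            exact Finset.sum_congr rfl fun z _ => by ring
          rw [h, hrow]; ring
        · rw [Finset.sum_comm]
          refine Finset.sum_congr rfl fun z _ => ?_
          have h : ∑ x, π x * Q x z * ((A z y) ^ 2 / 2)
              = (∑ x, π x * Q x z) * ((A z y) ^ 2 / 2) := by
            rw [Finset.sum_mul]
          rw [h, hcol]
    _ = ∑ x, π x * A x y * A x y := by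
        rw [← Finset.sum_add_distrib]
        exact Finset.sum_congr rfl fun x _ => by ring

lemma piAdj_rev [Fintype X] (π : X → ℝ) (hπ : ∀ x, 0 < π x) (Q : Matrix X X ℝ)
    (hrev : ∀ x y, π x * Q x y = π y * Q y x) : piAdj π Q = Q := by
  ext x y
  simp only [piAdj, Matrix.of_apply]
  rw [← hrev x y]
  exact mul_div_cancel_left₀ _ (hπ x).ne'

lemma piAdj_mul [Fintype X] (π : X → ℝ) (hπ : ∀ x, 0 < π x) (M N : Matrix X X ℝ) :
    piAdj π (M * N) = piAdj π N * piAdj π M := by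
  ext x y
  simp only [piAdj, Matrix.of_apply, Matrix.mul_apply]
  rw [Finset.mul_sum, Finset.sum_div]
  refine Finset.sum_congr rfl fun z _ => ?_
  have h1 := (hπ x).ne'
  have h2 := (hπ z).ne'
  field_simp

lemma piAdj_sub [Fintype X] (π : X → ℝ) (M N : Matrix X X ℝ) :
    piAdj π (M - N) = piAdj π M - piAdj π N := by
  ext x y
  simp only [piAdj, Matrix.of_apply, Matrix.sub_apply]
  ring

lemma piAdj_one [Fintype X] [DecidableEq X] (π : X → ℝ) (hπ : ∀ x, 0 < π x) :
    piAdj π (1 : Matrix X X ℝ) = 1 := by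
  ext x y
  simp only [piAdj, Matrix.of_apply, Matrix.one_apply]
  by_cases h : x = y
  · subst h
    simp [(hπ x).ne']
  · simp [h, Ne.symm h]

lemma piAdj_pow [Fintype X] [DecidableEq X] (π : X → ℝ) (hπ : ∀ x, 0 < π x)
    (M : Matrix X X ℝ) (n : ℕ) : piAdj π (M ^ n) = (piAdj π M) ^ n := by
  induction n with
  | zero => simpa using piAdj_one π hπ
  | succ m ih => rw [pow_succ, piAdj_mul π hπ, ih, pow_succ']

lemma ip_adj [Fintype X] (π : X → ℝ) (hπ : ∀ x, 0 < π x) (A : Matrix X X ℝ) :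
    ip π (piAdj π A) (piAdj π A) = ip π A A := by
  unfold ip
  rw [Finset.sum_comm]
  refine Finset.sum_congr rfl fun x _ => Finset.sum_congr rfl fun y _ => ?_
  simp only [piAdj, Matrix.of_apply]
  have h1 := (hπ x).ne'
  have h2 := (hπ y).ne'
  field_simp

lemma ip_proj [Fintype X] (π : X → ℝ) (hπ : ∀ x, 0 < π x) (G : Matrix X X ℝ)
    (hrev : ∀ x y, π x * G x y = π y * G y x) (hGG : G * G = G) (A : Matrix X X ℝ) :
    ip π (G * A) (G * A) ≤ ip π A A := by
  have key : ip π (G * A) (G * A) = ip π A (G * A) := by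
    rw [ip_move π G hrev A (G * A), ← Matrix.mul_assoc, hGG]
  have h0 := ip_nonneg π hπ (A - G * A)
  rw [ip_sub_left, ip_sub_right, ip_sub_right] at h0
  have hc : ip π (G * A) A = ip π A (G * A) := ip_comm π (G * A) A
  rw [key]
  linarith

lemma orbMass_pos' [Fintype X] {k : ℕ} (π : X → ℝ) (hπ : ∀ x, 0 < π x)
    (o : X → Fin k) (x : X) : 0 < orbMass π o (o x) := by
  refine Finset.sum_pos (fun y _ => hπ y) ⟨x, ?_⟩
  simp

lemma sum_ite_orb [Fintype X] {k : ℕ} (o : X → Fin k) (x : X) (f : X → ℝ) :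
    ∑ y, (if o x = o y then f y else 0)
      = ∑ y ∈ Finset.filter (fun y => o y = o x) Finset.univ, f y := by
  rw [Finset.sum_filter]
  refine Finset.sum_congr rfl fun y _ => ?_
  by_cases h : o x = o y
  · rw [if_pos h, if_pos h.symm]
  · rw [if_neg h, if_neg fun hh => h hh.symm]

lemma gibbs_rev [Fintype X] {k : ℕ} (π : X → ℝ) (o : X → Fin k) :
    ∀ x y, π x * gibbs π o x y = π y * gibbs π o y x := by
  intro x y
  simp only [gibbs, Matrix.of_apply]
  by_cases h : o x = o y
  · rw [if_pos h, if_pos h.symm, h]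
    ring
  · rw [if_neg h, if_neg fun hh => h hh.symm]
    ring

lemma gibbs_nonneg [Fintype X] {k : ℕ} (π : X → ℝ) (hπ : ∀ x, 0 < π x)
    (o : X → Fin k) : ∀ x y, 0 ≤ gibbs π o x y := by
  intro x y
  simp only [gibbs, Matrix.of_apply]
  by_cases h : o x = o y
  · rw [if_pos h]
    exact div_nonneg (hπ y).le (orbMass_pos' π hπ o x).le
  · rw [if_neg h]

lemma gibbs_row [Fintype X] {k : ℕ} (π : X → ℝ) (hπ : ∀ x, 0 < π x)
    (o : X → Fin k) : ∀ x, ∑ y, gibbs π o x y = 1 := by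
  intro x
  simp only [gibbs, Matrix.of_apply]
  rw [sum_ite_orb o x (fun y => π y / orbMass π o (o x)), ← Finset.sum_div]
  exact div_self (orbMass_pos' π hπ o x).ne'

lemma gibbs_idem [Fintype X] [DecidableEq X] {k : ℕ} (π : X → ℝ) (hπ : ∀ x, 0 < π x)
    (o : X → Fin k) : gibbs π o * gibbs π o = gibbs π o := by
  ext x y
  simp only [Matrix.mul_apply, gibbs, Matrix.of_apply]
  by_cases h : o x = o y
  · rw [if_pos h]
    have hsum : ∀ z ∈ Finset.univ,
        (if o x = o z then π z / orbMass π o (o x) else 0) *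
          (if o z = o y then π y / orbMass π o (o z) else 0)
        = (if o x = o z then π z else 0) *
            (π y / (orbMass π o (o x) * orbMass π o (o x))) := by
      intro z _
      by_cases hz : o x = o z
      · rw [if_pos hz, if_pos hz, if_pos (hz.symm.trans h), ← hz]
        ring
      · rw [if_neg hz, if_neg hz, zero_mul, zero_mul]
    rw [Finset.sum_congr rfl hsum, ← Finset.sum_mul, sum_ite_orb o x π]
    have hm := (orbMass_pos' π hπ o x).ne'
    show orbMass π o (o x) * (π y / (orbMass π o (o x) * orbMass π o (o x)))
        = π y / orbMass π o (o x)
    field_simp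
  · rw [if_neg h]
    refine Finset.sum_eq_zero fun z _ => ?_
    by_cases hz : o x = o z
    · rw [if_neg (fun hh => h (hz.trans hh)), mul_zero]
    · rw [if_neg hz, zero_mul]

lemma Pimat_rev [Fintype X] (π : X → ℝ) :
    ∀ x y, π x * Pimat π x y = π y * Pimat π y x := by
  intro x y
  simp only [Pimat, Matrix.of_apply]
  ring

lemma mul_Pimat [Fintype X] (π : X → ℝ) (M : Matrix X X ℝ)
    (hrow : ∀ x, ∑ y, M x y = 1) : M * Pimat π = Pimat π := by
  ext x y
  simp only [Matrix.mul_apply, Pimat, Matrix.of_apply]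
  rw [← Finset.sum_mul, hrow, one_mul]

lemma Pimat_mul [Fintype X] (π : X → ℝ) (M : Matrix X X ℝ)
    (hstat : ∀ y, ∑ x, π x * M x y = π y) : Pimat π * M = Pimat π := by
  ext x y
  simp only [Matrix.mul_apply, Pimat, Matrix.of_apply]
  exact hstat y

lemma stat_of_rev [Fintype X] (π : X → ℝ) (M : Matrix X X ℝ)
    (hrev : ∀ x y, π x * M x y = π y * M y x) (hrow : ∀ x, ∑ y, M x y = 1) :
    ∀ y, ∑ x, π x * M x y = π y := by
  intro y
  calc ∑ x, π x * M x y = ∑ x, π y * M y x :=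
        Finset.sum_congr rfl fun x _ => hrev x y
    _ = π y * ∑ x, M y x := by rw [Finset.mul_sum]
    _ = π y := by rw [hrow]; ring

/-- Frobenius-norm comparisons between (GPG)^l, (PG)^l and (GP)^l. -/
theorem stmt7 [Fintype X] [DecidableEq X] {k : ℕ} (π : X → ℝ) (o : X → Fin k)
    (hπ : ∀ x, 0 < π x) (hsum : ∑ x, π x = 1) (ho : Function.Surjective o)
    (P : Matrix X X ℝ) (hP : IsReversible π P) (l : ℕ) (hl : 0 < l) :
    Real.sqrt (frobSq π ((gibbs π o * P * gibbs π o) ^ l - Pimat π))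
        ≤ Real.sqrt (frobSq π ((P * gibbs π o) ^ l - Pimat π)) ∧
    Real.sqrt (frobSq π ((P * gibbs π o) ^ l - Pimat π))
        = Real.sqrt (frobSq π ((gibbs π o * P) ^ l - Pimat π)) ∧
    (2 ≤ l →
      Real.sqrt (frobSq π ((P * gibbs π o) ^ l - Pimat π))
        ≤ Real.sqrt (frobSq π ((gibbs π o * P * gibbs π o) ^ (l - 1) - Pimat π))) := by
  obtain ⟨⟨p0, prow⟩, prev⟩ := hP
  set G := gibbs π o with hGdef
  set Pm := Pimat π with hPmdef
  have grev : ∀ x y, π x * G x y = π y * G y x := gibbs_rev π o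
  have g0 : ∀ x y, 0 ≤ G x y := gibbs_nonneg π hπ o
  have grow : ∀ x, ∑ y, G x y = 1 := gibbs_row π hπ o
  have ggi : G * G = G := gibbs_idem π hπ o
  have pirev : ∀ x y, π x * Pm x y = π y * Pm y x := Pimat_rev π
  have hGPi : G * Pm = Pm := mul_Pimat π G grow
  have hPiG : Pm * G = Pm := Pimat_mul π G (stat_of_rev π G grev grow)
  have hPPi : P * Pm = Pm := mul_Pimat π P prow
  have pprev : ∀ x y, π x * (P * P) x y = π y * (P * P) y x := by
    intro x y
    simp only [Matrix.mul_apply, Finset.mul_sum]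
    refine Finset.sum_congr rfl fun z _ => ?_
    calc π x * (P x z * P z y) = (π x * P x z) * P z y := by ring
      _ = (π z * P z x) * P z y := by rw [prev x z]
      _ = (π z * P z y) * P z x := by ring
      _ = (π y * P y z) * P z x := by rw [← prev y z]
      _ = π y * (P y z * P z x) := by ring
  have pp0 : ∀ x y, 0 ≤ (P * P) x y := fun x y =>
    Finset.sum_nonneg fun z _ => mul_nonneg (p0 x z) (p0 z y)
  have pprow : ∀ x, ∑ y, (P * P) x y = 1 := by
    intro x
    simp only [Matrix.mul_apply]
    rw [Finset.sum_comm]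
    calc ∑ z, ∑ y, P x z * P z y = ∑ z, P x z * ∑ y, P z y := by
          exact Finset.sum_congr rfl fun z _ => by rw [Finset.mul_sum]
      _ = ∑ z, P x z := Finset.sum_congr rfl fun z _ => by rw [prow, mul_one]
      _ = 1 := prow x
  have contrP : ∀ A : Matrix X X ℝ, ip π (P * A) (P * A) ≤ ip π A A := by
    intro A
    have h1 : ip π (P * A) (P * A) = ip π A ((P * P) * A) := by
      rw [ip_move π P prev, Matrix.mul_assoc]
    rw [h1]
    exact ip_contract π hπ (P * P) pprev pp0 pprow A
  have contrGl : ∀ A : Matrix X X ℝ, ip π (G * A) (G * A) ≤ ip π A A :=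
    ip_proj π hπ G grev ggi
  have contrGr : ∀ A : Matrix X X ℝ, ip π (A * G) (A * G) ≤ ip π A A := by
    intro A
    rw [← ip_adj π hπ (A * G), piAdj_mul π hπ, piAdj_rev π hπ G grev]
    calc ip π (G * piAdj π A) (G * piAdj π A)
        ≤ ip π (piAdj π A) (piAdj π A) := contrGl _
      _ = ip π A A := ip_adj π hπ A
  have hpow : ∀ n, 1 ≤ n →
      (G * P * G) ^ n = G * (P * G) ^ n ∧ (P * G) ^ n * G = (P * G) ^ n := by
    intro n hn
    induction n, hn using Nat.le_induction with
    | base =>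
      constructor
      · rw [pow_one, pow_one, Matrix.mul_assoc]
      · rw [pow_one, Matrix.mul_assoc, ggi]
    | succ m hm ih =>
      obtain ⟨h1, h2⟩ := ih
      have h2' : (P * G) ^ (m + 1) * G = (P * G) ^ (m + 1) := by
        rw [pow_succ, Matrix.mul_assoc ((P * G) ^ m), Matrix.mul_assoc P G G, ggi]
      refine ⟨?_, h2'⟩
      rw [pow_succ, pow_succ, h1]
      calc G * (P * G) ^ m * (G * P * G)
          = G * ((P * G) ^ m * (G * P * G)) := by rw [Matrix.mul_assoc]
        _ = G * ((P * G) ^ m * (G * (P * G))) := by rw [Matrix.mul_assoc G P G]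
        _ = G * ((P * G) ^ m * G * (P * G)) := by rw [Matrix.mul_assoc ((P * G) ^ m)]
        _ = G * ((P * G) ^ m * (P * G)) := by rw [h2]
  have id1 : (G * P * G) ^ l - Pm = G * ((P * G) ^ l - Pm) := by
    rw [Matrix.mul_sub, (hpow l hl).1, hGPi]
  have id2 : (G * P) ^ l - Pm = piAdj π ((P * G) ^ l - Pm) := by
    rw [piAdj_sub, piAdj_pow π hπ, piAdj_mul π hπ, piAdj_rev π hπ G grev,
        piAdj_rev π hπ P prev, piAdj_rev π hπ Pm pirev]
  refine ⟨?_, ?_, ?_⟩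
  · apply Real.sqrt_le_sqrt
    rw [frobSq_eq, frobSq_eq, id1]
    exact contrGl _
  · have h : frobSq π ((P * G) ^ l - Pm) = frobSq π ((G * P) ^ l - Pm) := by
      rw [frobSq_eq, frobSq_eq, id2, ip_adj π hπ]
    rw [h]
  · intro hl2
    have hl1 : 1 ≤ l - 1 := by omega
    have id3 : (P * G) ^ l - Pm = P * (((G * P * G) ^ (l - 1) - Pm) * G) := by
      have hb : P * (Pm * G) = Pm := by rw [hPiG, hPPi]
      have ha : P * ((G * P * G) ^ (l - 1) * G) = (P * G) ^ l := by
        rw [(hpow (l - 1) hl1).1]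
        calc P * (G * (P * G) ^ (l - 1) * G)
            = P * (G * ((P * G) ^ (l - 1) * G)) := by rw [Matrix.mul_assoc G]
          _ = P * (G * (P * G) ^ (l - 1)) := by rw [(hpow (l - 1) hl1).2]
          _ = P * G * (P * G) ^ (l - 1) := by rw [Matrix.mul_assoc]
          _ = (P * G) ^ (l - 1 + 1) := by rw [pow_succ']
          _ = (P * G) ^ l := by rw [Nat.sub_add_cancel hl]
      rw [Matrix.sub_mul, Matrix.mul_sub, ha, hb]
    apply Real.sqrt_le_sqrt
    rw [frobSq_eq, frobSq_eq, id3]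
    calc ip π (P * (((G * P * G) ^ (l - 1) - Pm) * G))
            (P * (((G * P * G) ^ (l - 1) - Pm) * G))
        ≤ ip π (((G * P * G) ^ (l - 1) - Pm) * G)
            (((G * P * G) ^ (l - 1) - Pm) * G) := contrP _
      _ ≤ ip π ((G * P * G) ^ (l - 1) - Pm) ((G * P * G) ^ (l - 1) - Pm) := contrGr _

end
end GpgStmt
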